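/- arXiv:1304.1813 — 2 statements merged into one kernel-verified Lean document; each statement's English description precedes it below -/
import Mathlib

section
/- Let I ⊆ ℝ be a nonempty open interval and let f : ℝ → ℝ be twice differentiable on I with f''(t₀) ≠ 0 for some t₀ ∈ I. Then the three functions t ↦ 1, t ↦ f'(t), and t ↦ f(t) − t·f'(t), regarded as real-valued functions on I, are linearly independent over ℝ: if a + b·f'(t) + c·(f(t) − t·f'(t)) = 0 for all t ∈ I with a, b, c ∈ ℝ, then a = b = c = 0. -/
/-- If `f` is twice differentiable on a nonempty open interval `I` with `f''(t₀) ≠ 0`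
for some `t₀ ∈ I`, then the functions `1`, `f'`, and `t ↦ f(t) − t·f'(t)` are
linearly independent over `ℝ` as functions on `I`. -/
theorem statement1 (I : Set ℝ) (hIopen : IsOpen I) (hIconn : I.OrdConnected)
    (hIne : I.Nonempty) (f : ℝ → ℝ)
    (hf : ∀ t ∈ I, DifferentiableAt ℝ f t)
    (hf' : ∀ t ∈ I, DifferentiableAt ℝ (deriv f) t)
    (t₀ : ℝ) (ht₀ : t₀ ∈ I) (hf'' : deriv (deriv f) t₀ ≠ 0)
    (a b c : ℝ)
    (hrel : ∀ t ∈ I, a + b * deriv f t + c * (f t - t * deriv f t) = 0) :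
    a = 0 ∧ b = 0 ∧ c = 0 := by
  have key : ∀ t ∈ I, (b - c * t) * deriv (deriv f) t = 0 := by
    intro t ht
    have h1 := (hf' t ht).hasDerivAt
    have h2 := (hf t ht).hasDerivAt
    have hid : HasDerivAt (fun s => s * deriv f s)
        (1 * deriv f t + t * deriv (deriv f) t) t := (hasDerivAt_id t).mul h1
    have hsum : HasDerivAt (fun s => a + b * deriv f s + c * (f s - s * deriv f s))
        (0 + b * deriv (deriv f) t + c * (deriv f t - (1 * deriv f t + t * deriv (deriv f) t))) t :=
      ((hasDerivAt_const t a).add (h1.const_mul b)).add ((h2.sub hid).const_mul c)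
    have heq : (fun s => a + b * deriv f s + c * (f s - s * deriv f s))
        =ᶠ[nhds t] fun _ => (0 : ℝ) := by
      filter_upwards [hIopen.mem_nhds ht] with s hs
      exact hrel s hs
    have h0 : HasDerivAt (fun s => a + b * deriv f s + c * (f s - s * deriv f s)) 0 t :=
      (hasDerivAt_const t (0 : ℝ)).congr_of_eventuallyEq heq
    have := hsum.unique h0
    calc (b - c * t) * deriv (deriv f) t
        = 0 + b * deriv (deriv f) t
          + c * (deriv f t - (1 * deriv f t + t * deriv (deriv f) t)) := by ring
      _ = 0 := this
  have hb : b = c * t₀ := by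
    rcases mul_eq_zero.1 (key t₀ ht₀) with h | h
    · linarith
    · exact absurd h hf''
  have hc : c = 0 := by
    by_contra hc
    have hzero : ∀ t ∈ I, t ≠ t₀ → deriv (deriv f) t = 0 := by
      intro t ht hne
      have hne' : b - c * t ≠ 0 := by
        rw [hb]
        intro h'
        exact hne (by have := mul_left_cancel₀ hc (by linarith : c * t₀ = c * t); linarith)
      rcases mul_eq_zero.1 (key t ht) with h | h
      · exact absurd h hne'
      · exact h
    obtain ⟨ε, hε, hball⟩ := Metric.isOpen_iff.1 hIopen t₀ ht₀
    have ht₁ : t₀ + ε / 2 ∈ I := by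
      apply hball
      simp only [Metric.mem_ball, Real.dist_eq]
      rw [abs_of_pos (by linarith)]
      linarith
    have ht₁ne : t₀ + ε / 2 ≠ t₀ := by intro h; linarith [hε]
    have h0img : (0 : ℝ) ∈ deriv (deriv f) '' I :=
      ⟨t₀ + ε / 2, ht₁, hzero _ ht₁ ht₁ne⟩
    have hLimg : deriv (deriv f) t₀ ∈ deriv (deriv f) '' I := ⟨t₀, ht₀, rfl⟩
    have hord := hIconn.image_deriv hf'
    have hm : deriv (deriv f) t₀ / 2 ∈ deriv (deriv f) '' I := by
      rcases lt_or_gt_of_ne hf'' with h | h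
      · exact hord.out hLimg h0img ⟨by linarith, by linarith⟩
      · exact hord.out h0img hLimg ⟨by linarith, by linarith⟩
    obtain ⟨t, ht, htm⟩ := hm
    by_cases hne : t = t₀
    · subst hne; exact hf'' (by linarith)
    · rw [hzero t ht hne] at htm
      exact hf'' (by linarith)
  have hb0 : b = 0 := by rw [hb, hc, zero_mul]
  refine ⟨?_, hb0, hc⟩
  have := hrel t₀ ht₀
  rw [hb0, hc] at this
  linarith
end

section
/- Let I ⊆ ℝ be a nonempty open interval and let f : ℝ → ℝ be twice differentiable on I with f''(t) ≠ 0 for every t ∈ I. Then there do not exist real constants b₁, b₂, b₃, c₁, c₂, c₃ such that for all t ∈ I both f''(t)·(f(t) + b₂ + (b₁ − c₂)·t − c₁·t²) = 0 and f''(t)·(t·f(t) − b₃ + (c₃ − b₂)·t + c₂·t²) = 0 hold. -/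
/-!
Dividing by `f''`, the first equation says that `f` is the quadratic `c₁ t² + (c₂ - b₁) t - b₂`
on `I`; substituting this into the second one, a cubic with leading coefficient `c₁` vanishes
on `I`. An open nonempty set of reals is infinite, so that cubic is the zero polynomial; hence `c₁ = 0`, `f` is affine on `I` and `f'' = 2 c₁ = 0` there.
-/

open Set

theorem Cubic.eq_zero_of_infinite_roots {R : Type*} [CommRing R] [IsDomain R] (P : Cubic R)
    {s : Set R} (hs : s.Infinite) (h : ∀ x ∈ s, P.a * x ^ 3 + P.b * x ^ 2 + P.c * x + P.d = 0) :
    P = 0 :=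
  P.toPoly_eq_zero_iff.mp <| P.toPoly.eq_zero_of_infinite_isRoot <| hs.mono fun x hx => by
    simpa [Cubic.toPoly] using h x hx

theorem deriv_deriv_of_eqOn_quadratic {𝕜 : Type*} [NontriviallyNormedField 𝕜] {s : Set 𝕜}
    (hs : IsOpen s) {f : 𝕜 → 𝕜} {a b c : 𝕜} (hf : EqOn f (fun t => a * t ^ 2 + b * t + c) s)
    {x : 𝕜} (hx : x ∈ s) : deriv (deriv f) x = 2 * a := by
  have hq : deriv (fun t => a * t ^ 2 + b * t + c) = fun t => 2 * a * t + b := funext fun t =>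
    ((((hasDerivAt_pow 2 t).const_mul a).add ((hasDerivAt_id' t).const_mul b)).add_const
      c).deriv.trans (by push_cast; ring)
  rw [(hf.eventuallyEq_of_mem (hs.mem_nhds hx)).deriv.deriv_eq, hq]
  exact (((hasDerivAt_id' x).const_mul (2 * a)).add_const b).deriv.trans (mul_one _)

theorem statement3_general (I : Set ℝ) (hIopen : IsOpen I)
    (hIne : I.Nonempty) (f : ℝ → ℝ)
    (hf'' : ∀ t ∈ I, deriv (deriv f) t ≠ 0) :
    ¬ ∃ b₁ b₂ b₃ c₁ c₂ c₃ : ℝ, ∀ t ∈ I,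
        deriv (deriv f) t * (f t + b₂ + (b₁ - c₂) * t - c₁ * t ^ 2) = 0 ∧
        deriv (deriv f) t * (t * f t - b₃ + (c₃ - b₂) * t + c₂ * t ^ 2) = 0 := by
  rintro ⟨b₁, b₂, b₃, c₁, c₂, c₃, h⟩
  have hE₁ (t : ℝ) (ht : t ∈ I) := (mul_eq_zero_iff_left (hf'' t ht)).mp (h t ht).1
  have hE₂ (t : ℝ) (ht : t ∈ I) := (mul_eq_zero_iff_left (hf'' t ht)).mp (h t ht).2
  have hquad : EqOn f (fun t => c₁ * t ^ 2 + (c₂ - b₁) * t + -b₂) I := fun t ht => by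
    linear_combination hE₁ t ht
  obtain ⟨t₀, ht₀⟩ := hIne
  have hcubic : (⟨c₁, 2 * c₂ - b₁, c₃ - 2 * b₂, -b₃⟩ : Cubic ℝ) = 0 :=
    Cubic.eq_zero_of_infinite_roots _ (infinite_of_mem_nhds t₀ (hIopen.mem_nhds ht₀))
      fun t ht => by linear_combination hE₂ t ht - t * hE₁ t ht
  have hc₁ : c₁ = 0 := congrArg Cubic.a hcubic
  apply hf'' t₀ ht₀
  rw [deriv_deriv_of_eqOn_quadratic hIopen hquad ht₀, hc₁, mul_zero]

/-- If `f` is twice differentiable on a nonempty open interval `I` with `f''` nowhere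
vanishing on `I`, then there are no constants `b₁, b₂, b₃, c₁, c₂, c₃` making
`f''·(f + b₂ + (b₁−c₂)t − c₁t²)` and `f''·(t·f − b₃ + (c₃−b₂)t + c₂t²)` vanish on `I`. -/
theorem statement3 (I : Set ℝ) (hIopen : IsOpen I) (hIconn : I.OrdConnected)
    (hIne : I.Nonempty) (f : ℝ → ℝ)
    (hf : ∀ t ∈ I, DifferentiableAt ℝ f t)
    (hf' : ∀ t ∈ I, DifferentiableAt ℝ (deriv f) t)
    (hf'' : ∀ t ∈ I, deriv (deriv f) t ≠ 0) :
    ¬ ∃ b₁ b₂ b₃ c₁ c₂ c₃ : ℝ, ∀ t ∈ I,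
        deriv (deriv f) t * (f t + b₂ + (b₁ - c₂) * t - c₁ * t ^ 2) = 0 ∧
        deriv (deriv f) t * (t * f t - b₃ + (c₃ - b₂) * t + c₂ * t ^ 2) = 0 :=
  statement3_general I hIopen hIne f hf''
end
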